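/- Let p : [0,1] × ℝᵐ → ℝᵏ be continuously differentiable and let f, h : [0,1] → ℝᵐ be continuous. Then, as s → 0 (s ≠ 0), the quantity sup_{t∈[0,1]} | (p(t, f(t) + s·h(t)) − p(t, f(t)))/s − D_y p(t, f(t))(h(t)) | tends to 0, where D_y p(t, y) denotes the partial Fréchet derivative of p with respect to the second variable. In other words, the Gâteaux derivative of the composition operator P(g)(t) = p(t, g(t)) at f in direction h exists in the sup-norm topology and is given by [DP(f)h](t) = D_y p(t, f(t))(h(t)). -/

import Mathlib

open Set Filter Topology

set_option maxHeartbeats 1000000 in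
/-- Let `p : [0,1] × ℝᵐ → ℝᵏ` be `C¹` and `f, h : [0,1] → ℝᵐ` be
continuous. Then, as `s → 0` (`s ≠ 0`),
`sup_{t ∈ [0,1]} | (p(t, f t + s·h t) − p(t, f t))/s − D_y p(t, f t) (h t) | → 0`;
i.e. the Gâteaux derivative of the composition operator `P(g)(t) = p(t, g(t))` at `f`
in direction `h` exists in the sup-norm and is `t ↦ D_y p(t, f t) (h t)`. -/
theorem statement4 (m k : ℕ)
    (p : ℝ × EuclideanSpace ℝ (Fin m) → EuclideanSpace ℝ (Fin k))
    (hp : ContDiffOn ℝ 1 p (Icc (0:ℝ) 1 ×ˢ (univ : Set (EuclideanSpace ℝ (Fin m)))))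
    (f h : ℝ → EuclideanSpace ℝ (Fin m))
    (hf : ContinuousOn f (Icc (0:ℝ) 1)) (hh : ContinuousOn h (Icc (0:ℝ) 1)) :
    Tendsto
      (fun s : ℝ =>
        ⨆ t : Icc (0:ℝ) 1,
          ‖s⁻¹ • (p (t, f t + s • h t) - p (t, f t)) -
            fderiv ℝ (fun y => p (t, y)) (f t) (h t)‖)
      (𝓝[≠] (0:ℝ)) (𝓝 0) := by
  classical
  haveI : Nonempty (Icc (0:ℝ) 1) := ⟨⟨0, by norm_num⟩⟩
  set S : Set (ℝ × EuclideanSpace ℝ (Fin m)) := Icc (0:ℝ) 1 ×ˢ (univ : Set (EuclideanSpace ℝ (Fin m))) with hSdef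
  have hSu : UniqueDiffOn ℝ S := (uniqueDiffOn_Icc one_pos).prod uniqueDiffOn_univ
  set A : ℝ × EuclideanSpace ℝ (Fin m) → (EuclideanSpace ℝ (Fin m) →L[ℝ] EuclideanSpace ℝ (Fin k)) :=
    fun x => (fderivWithin ℝ p S x).comp (ContinuousLinearMap.inr ℝ ℝ (EuclideanSpace ℝ (Fin m))) with hAdef
  -- the partial derivative in `y` is `A`
  have hderiv : ∀ t ∈ Icc (0:ℝ) 1, ∀ y : EuclideanSpace ℝ (Fin m),
      HasFDerivAt (fun y' => p (t, y')) (A (t, y)) y := by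
    intro t ht y
    have hmem : ((t, y) : ℝ × EuclideanSpace ℝ (Fin m)) ∈ S := by simp [hSdef, ht]
    have h1 : HasFDerivWithinAt p (fderivWithin ℝ p S (t, y)) S (t, y) :=
      ((hp.differentiableOn one_ne_zero) (t, y) hmem).hasFDerivWithinAt
    have h2 : HasFDerivAt (fun y' : EuclideanSpace ℝ (Fin m) => ((t, y') : ℝ × EuclideanSpace ℝ (Fin m)))
        (ContinuousLinearMap.inr ℝ ℝ (EuclideanSpace ℝ (Fin m))) y := hasFDerivAt_prodMk_right t y
    have h3 := h1.comp (t := S) y (h2.hasFDerivWithinAt (s := univ))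
      (fun z _ => by simp [hSdef, ht])
    rw [hasFDerivWithinAt_univ] at h3
    exact h3
  have hfderiv : ∀ t ∈ Icc (0:ℝ) 1,
      fderiv ℝ (fun y => p (t, y)) (f t) = A (t, f t) := fun t ht =>
    (hderiv t ht (f t)).fderiv
  -- `A` is continuous on `S`
  have hAc : ContinuousOn A S :=
    (hp.continuousOn_fderivWithin hSu le_rfl).clm_comp continuousOn_const
  -- bounds for `f` and `h`
  obtain ⟨Mf0, hMf0⟩ := (isCompact_Icc (a := (0:ℝ)) (b := 1)).exists_bound_of_continuousOn hf
  obtain ⟨Mh0, hMh0⟩ := (isCompact_Icc (a := (0:ℝ)) (b := 1)).exists_bound_of_continuousOn hh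
  set Mf : ℝ := max Mf0 0 with hMfdef
  set M : ℝ := max Mh0 0 with hMdef
  have hMf : ∀ t ∈ Icc (0:ℝ) 1, ‖f t‖ ≤ Mf := fun t ht => (hMf0 t ht).trans (le_max_left _ _)
  have hM : ∀ t ∈ Icc (0:ℝ) 1, ‖h t‖ ≤ M := fun t ht => (hMh0 t ht).trans (le_max_left _ _)
  have hMf' : 0 ≤ Mf := le_max_right _ _
  have hM' : 0 ≤ M := le_max_right _ _
  -- compact set and uniform continuity of `A`
  set K : Set (ℝ × EuclideanSpace ℝ (Fin m)) := Icc (0:ℝ) 1 ×ˢ Metric.closedBall (0 : EuclideanSpace ℝ (Fin m)) (Mf + M) with hKdef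
  have hKc : IsCompact K := isCompact_Icc.prod (isCompact_closedBall _ _)
  have hKS : K ⊆ S := Set.prod_mono_right (subset_univ _)
  have hAu : UniformContinuousOn A K :=
    hKc.uniformContinuousOn_of_continuous (hAc.mono hKS)
  rw [Metric.tendsto_nhdsWithin_nhds]
  intro ε hε
  set ε' : ℝ := ε / (2 * (M + 1)) with hε'def
  have hε'pos : 0 < ε' := div_pos hε (by positivity)
  obtain ⟨δ, hδpos, hδ⟩ := Metric.uniformContinuousOn_iff.1 hAu ε' hε'pos
  refine ⟨min δ 1 / (M + 1), by positivity, ?_⟩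
  intro s hs hsd
  have hs0 : s ≠ 0 := hs
  rw [Real.dist_eq, sub_zero] at hsd
  have hsM : |s| * (M + 1) < min δ 1 := by
    rwa [lt_div_iff₀ (by positivity : (0:ℝ) < M + 1)] at hsd
  have hs1 : |s| ≤ 1 := by
    nlinarith [abs_nonneg s, min_le_right δ 1, hM']
  have hsδ : |s| * M < δ := by
    nlinarith [abs_nonneg s, min_le_left δ 1]
  -- pointwise estimate
  have key : ∀ t : Icc (0:ℝ) 1,
      ‖s⁻¹ • (p (t, f t + s • h t) - p (t, f t)) -
        fderiv ℝ (fun y => p (t, y)) (f t) (h t)‖ ≤ ε' * M := by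
    rintro ⟨t, ht⟩
    simp only
    rw [hfderiv t ht]
    set a : EuclideanSpace ℝ (Fin m) := f t with hadef
    set b : EuclideanSpace ℝ (Fin m) := f t + s • h t with hbdef
    set seg : Set (EuclideanSpace ℝ (Fin m)) := segment ℝ a b with hsegdef
    have hsub : ∀ z ∈ seg, ‖z - a‖ ≤ |s| * ‖h t‖ := by
      intro z hz
      rw [hsegdef, segment_eq_image'] at hz
      obtain ⟨θ, hθ, rfl⟩ := hz
      have : b - a = s • h t := by simp [hbdef, hadef]
      rw [this, add_sub_cancel_left]
      have habs : |θ| ≤ 1 := abs_le.2 ⟨by linarith [hθ.1], hθ.2⟩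
      calc ‖θ • s • h t‖ = |θ| * ‖s • h t‖ := by rw [norm_smul, Real.norm_eq_abs]
        _ ≤ 1 * ‖s • h t‖ := mul_le_mul_of_nonneg_right habs (norm_nonneg _)
        _ = |s| * ‖h t‖ := by rw [one_mul, norm_smul, Real.norm_eq_abs]
    have hKmem : ∀ z ∈ seg, ((t, z) : ℝ × EuclideanSpace ℝ (Fin m)) ∈ K := by
      intro z hz
      refine ⟨ht, ?_⟩
      simp only [Metric.mem_closedBall, dist_zero_right]
      have h1 : ‖z‖ ≤ ‖a‖ + ‖z - a‖ := by
        simpa using norm_add_le a (z - a)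
      have h2 : ‖z - a‖ ≤ |s| * ‖h t‖ := hsub z hz
      have h3 : |s| * ‖h t‖ ≤ 1 * M :=
        mul_le_mul hs1 (hM t ht) (norm_nonneg _) zero_le_one
      have := hMf t ht
      rw [hadef] at h1
      linarith [h1, h2, h3]
    have hbound : ∀ z ∈ seg, ‖A (t, z) - A (t, a)‖ ≤ ε' := by
      intro z hz
      have hdist : dist ((t, z) : ℝ × EuclideanSpace ℝ (Fin m)) (t, a) < δ := by
        rw [Prod.dist_eq]
        simp only [dist_self]
        have : dist z a < δ := by
          rw [dist_eq_norm]
          calc ‖z - a‖ ≤ |s| * ‖h t‖ := hsub z hz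
            _ ≤ |s| * M := mul_le_mul_of_nonneg_left (hM t ht) (abs_nonneg s)
            _ < δ := hsδ
        exact max_lt (by linarith [this]) this
      have := hδ (t, z) (hKmem z hz) (t, a) (hKmem a (left_mem_segment ℝ a b)) hdist
      rw [dist_eq_norm] at this
      exact this.le
    have hmv := Convex.norm_image_sub_le_of_norm_hasFDerivWithin_le'
      (f := fun y => p (t, y)) (f' := fun z => A (t, z)) (φ := A (t, a)) (C := ε')
      (s := seg)
      (fun z _ => (hderiv t ht z).hasFDerivWithinAt)
      hbound (hsegdef ▸ convex_segment a b)
      (hsegdef ▸ left_mem_segment ℝ a b) (hsegdef ▸ right_mem_segment ℝ a b)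
    have hba : b - a = s • h t := by simp [hbdef, hadef]
    rw [hba] at hmv
    have heq : ∀ (P Q : EuclideanSpace ℝ (Fin k))
        (φ : EuclideanSpace ℝ (Fin m) →L[ℝ] EuclideanSpace ℝ (Fin k)),
        s⁻¹ • (P - Q) - φ (h t) = s⁻¹ • (P - Q - φ (s • h t)) := by
      intro P Q φ
      simp [map_smul, smul_sub, inv_smul_smul₀ hs0]
    rw [heq (p (t, b)) (p (t, a)) (A (t, a)), norm_smul, norm_inv, Real.norm_eq_abs]
    calc |s|⁻¹ * ‖p (t, b) - p (t, a) - (A (t, a)) (s • h t)‖ ≤ |s|⁻¹ * (ε' * ‖s • h t‖) := by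
          exact mul_le_mul_of_nonneg_left hmv (by positivity)
      _ = |s|⁻¹ * (ε' * (|s| * ‖h t‖)) := by rw [norm_smul, Real.norm_eq_abs]
      _ = ε' * ‖h t‖ * (|s|⁻¹ * |s|) := by ring
      _ = ε' * ‖h t‖ := by rw [inv_mul_cancel₀ (abs_ne_zero.2 hs0), mul_one]
      _ ≤ ε' * M := mul_le_mul_of_nonneg_left (hM t ht) hε'pos.le
  -- conclude
  have hsup_le : (⨆ t : Icc (0:ℝ) 1,
      ‖s⁻¹ • (p (t, f t + s • h t) - p (t, f t)) -
        fderiv ℝ (fun y => p (t, y)) (f t) (h t)‖) ≤ ε' * M := ciSup_le key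
  have hsup_nonneg : (0:ℝ) ≤ ⨆ t : Icc (0:ℝ) 1,
      ‖s⁻¹ • (p (t, f t + s • h t) - p (t, f t)) -
        fderiv ℝ (fun y => p (t, y)) (f t) (h t)‖ :=
    Real.iSup_nonneg fun t => norm_nonneg _
  rw [Real.dist_eq, sub_zero, abs_of_nonneg hsup_nonneg]
  have : ε' * M < ε := by
    rw [hε'def]
    rw [div_mul_eq_mul_div, div_lt_iff₀ (by positivity)]
    nlinarith
  linarith [hsup_le]
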